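/- The set Δ⁰₂[FIN] of codes e such that {e}^A has finite domain for every Δ⁰₂ set A is a Π⁰₄ set. -/

import Mathlib

/-- The list of the first `n` values of `g`. -/
def funToList (g : ℕ → ℕ) (n : ℕ) : List ℕ := (List.range n).map g

open Classical in
/-- Characteristic (partial) function of a set of naturals, used as an oracle. -/
noncomputable def chi (A : Set ℕ) : ℕ →. ℕ := fun n => Part.some (if n ∈ A then 1 else 0)

/-- A total function regarded as a partial oracle. -/
def totalize (g : ℕ → ℕ) : ℕ →. ℕ := fun n => Part.some (g n)

/-- Codes for oracle Turing machines (partial recursive functionals). -/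
inductive OCode : Type
  | zero | succ | left | right | oracle
  | pair (a b : OCode) | comp (a b : OCode) | prec (a b : OCode) | rfind' (a : OCode)

/-- Evaluation of an oracle code with oracle `g`. -/
def OCode.eval (g : ℕ →. ℕ) : OCode → ℕ →. ℕ
  | .zero => pure 0
  | .succ => fun n => Part.some (n + 1)
  | .left => fun n => Part.some (Nat.unpair n).1
  | .right => fun n => Part.some (Nat.unpair n).2
  | .oracle => g
  | .pair a b => fun n => Nat.pair <$> OCode.eval g a n <*> OCode.eval g b n
  | .comp a b => fun n => OCode.eval g b n >>= OCode.eval g a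
  | .prec a b =>
      Nat.unpaired fun m n =>
        n.rec (OCode.eval g a m) fun y IH => do
          let i ← IH
          OCode.eval g b (Nat.pair m (Nat.pair y i))
  | .rfind' a =>
      Nat.unpaired fun m n =>
        (Nat.rfind fun k => (fun x => x = 0) <$> OCode.eval g a (Nat.pair m (k + n))).map (· + n)

/-- A surjective numbering of oracle codes. -/
def OCode.ofNat : ℕ → OCode
  | 0 => .zero
  | 1 => .succ
  | 2 => .left
  | 3 => .right
  | 4 => .oracle
  | n + 5 =>
    let m := n.div2.div2
    have hm : m < n + 5 := by
      simp only [m, Nat.div2_val]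
      exact lt_of_le_of_lt (le_trans (Nat.div_le_self _ _) (Nat.div_le_self _ _)) (by omega)
    have _m1 : m.unpair.1 < n + 5 := lt_of_le_of_lt m.unpair_left_le hm
    have _m2 : m.unpair.2 < n + 5 := lt_of_le_of_lt m.unpair_right_le hm
    match n.bodd, n.div2.bodd with
    | false, false => .pair (OCode.ofNat m.unpair.1) (OCode.ofNat m.unpair.2)
    | false, true  => .comp (OCode.ofNat m.unpair.1) (OCode.ofNat m.unpair.2)
    | true , false => .prec (OCode.ofNat m.unpair.1) (OCode.ofNat m.unpair.2)
    | true , true  => .rfind' (OCode.ofNat m)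
  decreasing_by
    all_goals first
      | exact _m1 | exact _m2 | exact hm
      | exact Nat.le_of_lt_succ _m1 | exact Nat.le_of_lt_succ _m2 | exact Nat.le_of_lt_succ hm
      | (simp_wf; first | exact Nat.le_of_lt_succ _m1 | exact Nat.le_of_lt_succ _m2 | exact Nat.le_of_lt_succ hm | omega)

/-- `{e}^g`, the `e`-th oracle machine with oracle `g`. -/
def OEval (e : ℕ) (g : ℕ →. ℕ) : ℕ →. ℕ := (OCode.ofNat e).eval g

/-- `{e}`, the `e`-th (ordinary) partial recursive function. -/
def phi (e : ℕ) : ℕ →. ℕ := (Denumerable.ofNat Nat.Partrec.Code e).eval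

/-- `W_e`, the `e`-th computably enumerable set. -/
def We (e : ℕ) : Set ℕ := {n | (phi e n).Dom}

/-- `A` is computably enumerable. -/
def CE (A : Set ℕ) : Prop := ∃ e : ℕ, A = We e

/-- `A` is Δ⁰₂ (limit computable). -/
def Delta02 (A : Set ℕ) : Prop :=
  ∃ F : ℕ → ℕ → Bool, Computable₂ F ∧ ∀ x, ∃ N, ∀ s ≥ N, (F s x = true ↔ x ∈ A)

/-- Π⁰₂ subsets of ℕ. -/
def Pi2 (S : Set ℕ) : Prop :=
  ∃ R : ℕ × ℕ × ℕ → Bool, Computable R ∧ S = {e | ∀ a, ∃ b, R (e, a, b) = true}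

/-- Π⁰₃ subsets of ℕ. -/
def Pi3 (S : Set ℕ) : Prop :=
  ∃ R : ℕ × ℕ × ℕ × ℕ → Bool, Computable R ∧ S = {e | ∀ a, ∃ b, ∀ c, R (e, a, b, c) = true}

/-- Π⁰₄ subsets of ℕ. -/
def Pi4 (S : Set ℕ) : Prop :=
  ∃ R : ℕ × ℕ × ℕ × ℕ × ℕ → Bool, Computable R ∧
    S = {e | ∀ a, ∃ b, ∀ c, ∃ d, R (e, a, b, c, d) = true}

/-- Π¹₁ subsets of ℕ (Kleene normal form). -/
def Pi11 (S : Set ℕ) : Prop :=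
  ∃ R : ℕ × List ℕ → Bool, Computable R ∧
    S = {e | ∀ f : ℕ → ℕ, ∃ n, R (e, funToList f n) = true}

/-- Many-one reducibility. -/
def ManyOneRed (T S : Set ℕ) : Prop := ∃ h : ℕ → ℕ, Computable h ∧ ∀ e, e ∈ T ↔ h e ∈ S

def Pi2Complete (S : Set ℕ) : Prop := Pi2 S ∧ ∀ T, Pi2 T → ManyOneRed T S
def Pi3Complete (S : Set ℕ) : Prop := Pi3 S ∧ ∀ T, Pi3 T → ManyOneRed T S
def Pi4Complete (S : Set ℕ) : Prop := Pi4 S ∧ ∀ T, Pi4 T → ManyOneRed T S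
def Pi11Complete (S : Set ℕ) : Prop := Pi11 S ∧ ∀ T, Pi11 T → ManyOneRed T S

/-- `g` is an `n`-bounded diagonally non-computable function. -/
def DNCb (n : ℕ) (g : ℕ → ℕ) : Prop := (∀ x, g x < n) ∧ ∀ x y, y ∈ phi x x → g x ≠ y

/-- `g` is diagonally non-computable. -/
def DNCfun (g : ℕ → ℕ) : Prop := ∀ x y, y ∈ phi x x → g x ≠ y

/-- `A` is immune: infinite with no infinite c.e. subset. -/
def Immune (A : Set ℕ) : Prop := A.Infinite ∧ ∀ B, CE B → B.Infinite → ¬B ⊆ A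

/-- `A` is bi-immune. -/
def BiImmune (A : Set ℕ) : Prop := Immune A ∧ Immune Aᶜ

/-- `f` is strongly non-recursive. -/
def SNR (f : ℕ → ℕ) : Prop :=
  ∀ h : ℕ → ℕ, Computable h → ∀ᶠ n in Filter.atTop, f n ≠ h n

/-- A canonical numbering of all finite sets (presented as lists). -/
def CanonicalNumbering (H : ℕ → List ℕ) : Prop :=
  Computable H ∧ ∀ S : Finset ℕ, ∃ e, (H e).toFinset = S

/-- `R` is canonically immune. -/
def CanonImmune (R : Set ℕ) : Prop :=
  R.Infinite ∧ ∃ h : ℕ → ℕ, Computable h ∧ ∀ H, CanonicalNumbering H →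
    ∀ᶠ e in Filter.atTop, (∀ x ∈ H e, x ∈ R) → (H e).toFinset.card ≤ h e

/-- A Medvedev reduction of `F` (class of total functions) to `G` (class of partial oracles):
a single code `e` such that `{e}^g` is total and in `F` for every `g ∈ G`. -/
def MedvedevRed (F : Set (ℕ → ℕ)) (G : Set (ℕ →. ℕ)) : Prop :=
  ∃ e : ℕ, ∀ g ∈ G, ∃ f ∈ F, ∀ x, OEval e g x = Part.some (f x)

/-- The set `G[F]` of `G`-universal `F`-codes, for classes of partial oracles `G`
and total functions `F`. -/
def UnivCodes (G : Set (ℕ →. ℕ)) (F : Set (ℕ → ℕ)) : Set ℕ :=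
  {e | ∀ g ∈ G, ∃ f ∈ F, ∀ x, OEval e g x = Part.some (f x)}

/-- The set `G[F]` with total oracles. -/
def UnivCodesT (G : Set (ℕ → ℕ)) (F : Set (ℕ → ℕ)) : Set ℕ :=
  {e | ∀ g ∈ G, ∃ f ∈ F, ∀ x, OEval e (totalize g) x = Part.some (f x)}

open Classical in
noncomputable def UnivCodesSet (A : Set (ℕ → ℕ)) (B : Set (Set ℕ)) : Set ℕ :=
  {e | ∀ Y ∈ A, ∃ S ∈ B, ∀ x, OEval e (totalize Y) x = Part.some (if x ∈ S then 1 else 0)}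

/-- Π¹₁ classes of functions. -/
def Pi11Fun (C : Set (ℕ → ℕ)) : Prop :=
  ∃ R : List ℕ × List ℕ → Bool, Computable R ∧
    C = {f | ∀ g : ℕ → ℕ, ∃ n, R (funToList f n, funToList g n) = true}

/-- Σ¹₁ classes of functions. -/
def Sigma11Fun (C : Set (ℕ → ℕ)) : Prop :=
  ∃ R : List ℕ × List ℕ → Bool, Computable R ∧
    C = {f | ∃ g : ℕ → ℕ, ∀ n, R (funToList f n, funToList g n) = true}

/-- Hyperarithmetic (Δ¹₁) classes of functions. -/
def Hyp (C : Set (ℕ → ℕ)) : Prop := Pi11Fun C ∧ Sigma11Fun C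

/-- Hyperarithmetic classes of sets, via characteristic functions. -/
def HypSet (C : Set (Set ℕ)) : Prop :=
  Hyp {f | (∀ n, f n ≤ 1) ∧ {n | f n = 1} ∈ C}

/-- `B` is a tail set: closed under finite modifications. -/
def TailSet (B : Set (Set ℕ)) : Prop :=
  ∀ S T : Set ℕ, (S \ T ∪ T \ S).Finite → S ∈ B → T ∈ B

/-- Proper extension of finite strings. -/
def StrictPrefix (α β : List ℕ) : Prop := α <+: β ∧ α ≠ β

/-- A `Δ⁰₂` embedding of Baire space, given by a uniformly computable sequence of
`≺`-isomorphisms on finite strings converging pointwise to `fstar`, inducing `toFun`. -/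
structure Delta02Embedding where
  fs : ℕ → List ℕ → List ℕ
  fstar : List ℕ → List ℕ
  toFun : (ℕ → ℕ) → (ℕ → ℕ)
  computable : Computable₂ fs
  iso : ∀ s α β, StrictPrefix α β ↔ StrictPrefix (fs s α) (fs s β)
  limit : ∀ α, ∃ N, ∀ s ≥ N, fs s α = fstar α
  union : ∀ X n, fstar (funToList X n) = funToList (toFun X) (fstar (funToList X n)).length
  unbounded : ∀ X k, ∃ n, k ≤ (fstar (funToList X n)).length

/-- Π⁰₂ classes of functions. -/
def Pi02Class (P : Set (ℕ → ℕ)) : Prop :=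
  ∃ h : ℕ → ℕ → List ℕ, Computable₂ h ∧
    P = {X | ∀ n, ∃ s, h n s = funToList X (h n s).length}

/-- `{e}` is total. -/
def TotCode (e : ℕ) : Prop := ∀ i, (phi e i).Dom

/-- The computable tree coded by `e`: the downward closure of `{ρ_i : {e}(i) = 1}`. -/
def TreeOf (e : ℕ) : Set (List ℕ) :=
  {σ | ∃ τ : List ℕ, σ <+: τ ∧ ∃ i : ℕ, Denumerable.ofNat (List ℕ) i = τ ∧ 1 ∈ phi e i}

/-- Codes of total functions whose coded tree has no infinite branch. -/
def NoPath : Set ℕ :=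
  {e | TotCode e ∧ ¬∃ X : ℕ → ℕ, ∀ n, funToList X n ∈ TreeOf e}

/-- The set Δ⁰₂[FIN] of codes with finite domain on every Δ⁰₂ oracle. -/
def Delta02FIN : Set ℕ :=
  {e | ∀ A : Set ℕ, Delta02 A → {x | (OEval e (chi A) x).Dom}.Finite}

/-! A convergent oracle computation queries only finitely many values of its oracle, so
`{e}^A(x)` converges iff `{e}^σ(x)` converges for some finite initial segment `σ` of `A`.
When `A` is the limit of a `Δ⁰₂` code `d`, "`σ` is an initial segment of `A`" says that from
some stage on every approximation agrees with `σ`, a `Π⁰₁` condition on `(d, σ, stage)`;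
compiling oracle codes with a finite oracle into ordinary codes makes `{e}^σ(x)↓` a `Σ⁰₁`
condition. So halting on the limit of `d` is `Σ⁰₂` in `(e, d, x)`, finiteness of the domain is
`Σ⁰₃` in `(e, d)`, being a `Δ⁰₂` code is `Π⁰₃` in `d`, and `e ∈ Δ⁰₂[FIN]` says that every `d`
is either not a `Δ⁰₂` code or yields a finite domain. -/

open Filter
open Nat.Partrec (Code)

/-- Primitive recursive matrices suffice at level `0`: by Kleene's normal form they give the
usual classes `Σ⁰ₙ` for `n ≥ 1`. -/
def IsSigma : ℕ → {α : Type} → [Primcodable α] → (α → Prop) → Prop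
  | 0, _, _, P => PrimrecPred P
  | n + 1, _, _, P =>
    ∃ Q : _ × ℕ → Prop, IsSigma n (fun p => ¬Q p) ∧ ∀ a, P a ↔ ∃ k, Q (a, k)

def IsPi (n : ℕ) {α : Type} [Primcodable α] (P : α → Prop) : Prop :=
  IsSigma n fun a => ¬P a

section ArithmeticalHierarchy

variable {α β : Type} [Primcodable α] [Primcodable β] {n : ℕ} {P Q : α → Prop}

theorem IsSigma.of_iff (h : IsSigma n P) (hPQ : ∀ a, P a ↔ Q a) : IsSigma n Q :=
  funext (fun a => propext (hPQ a)) ▸ h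

theorem IsPi.of_iff (h : IsPi n P) (hPQ : ∀ a, P a ↔ Q a) : IsPi n Q :=
  IsSigma.of_iff h fun a => not_congr (hPQ a)

theorem IsSigma.comp {f : β → α} (h : IsSigma n P) (hf : Primrec f) :
    IsSigma n fun b => P (f b) := by
  induction n generalizing α β with
  | zero => exact PrimrecPred.comp h hf
  | succ n ih =>
    obtain ⟨Q, hQ, hPQ⟩ := h
    exact ⟨fun p => Q (f p.1, p.2), ih (P := fun p => ¬Q p) hQ ((hf.comp .fst).pair .snd),
      fun b => hPQ (f b)⟩

theorem IsPi.comp {f : β → α} (h : IsPi n P) (hf : Primrec f) : IsPi n fun b => P (f b) :=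
  IsSigma.comp (P := fun a => ¬P a) h hf

theorem IsSigma.not (h : IsSigma n P) : IsPi n fun a => ¬P a :=
  h.of_iff fun _ => not_not.symm

theorem IsPi.exists_forall (h : IsPi (n + 1) P) :
    ∃ Q : α × ℕ → Prop, IsSigma n Q ∧ ∀ a, P a ↔ ∀ k, Q (a, k) := by
  obtain ⟨Q, hQ, hPQ⟩ := h
  exact ⟨fun p => ¬Q p, hQ, fun a => by rw [← not_exists, ← hPQ a, not_not]⟩

theorem IsPi.isSigma_succ (h : IsPi n P) : IsSigma (n + 1) P :=
  ⟨fun p => P p.1, h.comp .fst, fun _ => ⟨fun hP => ⟨0, hP⟩, fun ⟨_, hP⟩ => hP⟩⟩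

theorem IsSigma.succ (h : IsSigma n P) : IsSigma (n + 1) P := by
  induction n generalizing α P with
  | zero => exact IsPi.isSigma_succ (PrimrecPred.not h)
  | succ n ih =>
    obtain ⟨Q, hQ, hPQ⟩ := h
    exact ⟨Q, ih hQ, hPQ⟩

theorem IsPi.succ (h : IsPi n P) : IsPi (n + 1) P := IsSigma.succ h

theorem IsSigma.isPi_succ (h : IsSigma n P) : IsPi (n + 1) P := h.not.isSigma_succ

theorem PrimrecPred.isSigma (h : PrimrecPred P) : ∀ n, IsSigma n P
  | 0 => h
  | n + 1 => (h.isSigma n).succ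

theorem PrimrecPred.isPi (h : PrimrecPred P) (n : ℕ) : IsPi n P := h.not.isSigma n

theorem IsSigma.exists {γ : Type} [Denumerable γ] {P : α → γ → Prop}
    (h : IsSigma (n + 1) fun p : α × γ => P p.1 p.2) :
    IsSigma (n + 1) fun a => ∃ b, P a b := by
  obtain ⟨Q, hQ, hPQ⟩ := h
  refine ⟨fun p => Q ((p.1, Denumerable.ofNat γ p.2.unpair.1), p.2.unpair.2), hQ.comp ?_,
    fun a => ?_⟩
  · exact (Primrec.fst.pair ((Primrec.ofNat γ).comp (Primrec.fst.comp (Primrec.unpair.comp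
      Primrec.snd)))).pair (Primrec.snd.comp (Primrec.unpair.comp Primrec.snd))
  · simp only [fun b => hPQ (a, b)]
    constructor
    · rintro ⟨b, k, hk⟩
      exact ⟨Nat.pair (Encodable.encode b) k, by simpa using hk⟩
    · rintro ⟨m, hm⟩
      exact ⟨_, _, hm⟩

theorem IsPi.forall {γ : Type} [Denumerable γ] {P : α → γ → Prop}
    (h : IsPi (n + 1) fun p : α × γ => P p.1 p.2) : IsPi (n + 1) fun a => ∀ b, P a b :=
  (IsSigma.exists (P := fun a b => ¬P a b) h).of_iff fun _ => not_forall.symm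

theorem IsSigma.and_and_or (hP : IsSigma n P) (hQ : IsSigma n Q) :
    IsSigma n (fun a => P a ∧ Q a) ∧ IsSigma n (fun a => P a ∨ Q a) := by
  induction n generalizing α P Q with
  | zero => exact ⟨PrimrecPred.and hP hQ, PrimrecPred.or hP hQ⟩
  | succ n ih =>
    obtain ⟨P', hP', hPP'⟩ := hP
    obtain ⟨Q', hQ', hQQ'⟩ := hQ
    have hfst : Primrec fun p : α × ℕ => (p.1, p.2.unpair.1) :=
      Primrec.fst.pair (Primrec.fst.comp (Primrec.unpair.comp .snd))
    have hsnd : Primrec fun p : α × ℕ => (p.1, p.2.unpair.2) :=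
      Primrec.fst.pair (Primrec.snd.comp (Primrec.unpair.comp .snd))
    refine ⟨⟨fun p => P' (p.1, p.2.unpair.1) ∧ Q' (p.1, p.2.unpair.2),
      ((ih (hP'.comp hfst) (hQ'.comp hsnd)).2).of_iff fun _ => not_and_or.symm, fun a => ?_⟩,
      ⟨fun p => P' p ∨ Q' p, (ih hP' hQ').1.of_iff fun _ => not_or.symm, fun a => ?_⟩⟩
    · simp only [hPP', hQQ']
      constructor
      · rintro ⟨⟨i, hi⟩, j, hj⟩
        exact ⟨Nat.pair i j, by simpa using hi, by simpa using hj⟩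
      · rintro ⟨k, hk, hk'⟩
        exact ⟨⟨_, hk⟩, _, hk'⟩
    · simp only [hPP', hQQ', exists_or]

theorem IsSigma.and (hP : IsSigma n P) (hQ : IsSigma n Q) : IsSigma n fun a => P a ∧ Q a :=
  (hP.and_and_or hQ).1

theorem IsSigma.or (hP : IsSigma n P) (hQ : IsSigma n Q) : IsSigma n fun a => P a ∨ Q a :=
  (hP.and_and_or hQ).2

theorem IsPi.and (hP : IsPi n P) (hQ : IsPi n Q) : IsPi n fun a => P a ∧ Q a :=
  (IsSigma.or hP hQ).of_iff fun _ => not_and_or.symm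

theorem IsPi.or (hP : IsPi n P) (hQ : IsPi n Q) : IsPi n fun a => P a ∨ Q a :=
  (IsSigma.and hP hQ).of_iff fun _ => not_or.symm

end ArithmeticalHierarchy

theorem pi4_of_isPi {S : Set ℕ} (h : IsPi 4 (· ∈ S)) : Pi4 S := by
  obtain ⟨Q₁, h₁, e₁⟩ := h.exists_forall
  obtain ⟨Q₂, h₂, e₂⟩ := h₁
  obtain ⟨Q₃, h₃, e₃⟩ := IsPi.exists_forall (P := Q₂) h₂
  obtain ⟨Q₄, h₄, e₄⟩ := h₃
  obtain ⟨_, hR⟩ := PrimrecPred.of_eq (PrimrecPred.not h₄) fun _ => not_not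
  refine ⟨fun q => decide (Q₄ ((((q.1, q.2.1), q.2.2.1), q.2.2.2.1), q.2.2.2.2)),
    (hR.comp ?_).to_comp, ?_⟩
  · open Primrec in
    exact (((fst.pair (fst.comp snd)).pair (fst.comp (snd.comp snd))).pair
      (fst.comp (snd.comp (snd.comp snd)))).pair (snd.comp (snd.comp (snd.comp snd)))
  · ext e
    simp [e₁, e₂, e₃, e₄]

def listOracle (σ : List ℕ) : ℕ →. ℕ := fun n => Part.ofOption σ[n]?

theorem getElem?_funToList (f : ℕ → ℕ) (u n : ℕ) :
    (funToList f u)[n]? = if n < u then some (f n) else none := by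
  split_ifs with h
  · simp [funToList, List.getElem?_range h]
  · simp [funToList, h]

theorem listOracle_funToList_le (f : ℕ → ℕ) (u n : ℕ) :
    listOracle (funToList f u) n ≤ totalize f n := by
  intro a ha
  rw [listOracle, getElem?_funToList] at ha
  split_ifs at ha <;> simp_all [totalize]

namespace OCode

theorem eval_mono {g g' : ℕ →. ℕ} (h : ∀ n, g n ≤ g' n) (c : OCode) (x : ℕ) :
    c.eval g x ≤ c.eval g' x := by
  induction c generalizing x with
  | zero | succ | left | right => exact le_rfl
  | oracle => exact h x
  | pair a b iha ihb =>
    intro y hy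
    simp only [OCode.eval, Seq.seq, Part.map_eq_map, Part.mem_bind_iff, Part.mem_map_iff]
      at hy ⊢
    obtain ⟨_, ⟨u, hu, rfl⟩, v, hv, rfl⟩ := hy
    exact ⟨_, ⟨u, iha x u hu, rfl⟩, v, ihb x v hv, rfl⟩
  | comp a b iha ihb =>
    intro y hy
    obtain ⟨u, hu, hy⟩ := Part.mem_bind_iff.1 hy
    exact Part.mem_bind_iff.2 ⟨u, ihb x u hu, iha u y hy⟩
  | prec a b iha ihb =>
    simp only [OCode.eval, Nat.unpaired]
    induction x.unpair.2 with
    | zero => exact iha _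
    | succ n ihn =>
      intro y hy
      obtain ⟨i, hi, hy⟩ := Part.mem_bind_iff.1 hy
      exact Part.mem_bind_iff.2 ⟨i, ihn i hi, ihb _ y hy⟩
  | rfind' a iha =>
    have hmap : ∀ j, (fun v => decide (v = 0)) <$>
          a.eval g (Nat.pair x.unpair.1 (j + x.unpair.2)) ≤
        (fun v => decide (v = 0)) <$> a.eval g' (Nat.pair x.unpair.1 (j + x.unpair.2)) := by
      intro j b hb
      obtain ⟨v, hv, rfl⟩ := (Part.mem_map_iff _).1 hb
      exact (Part.mem_map_iff _).2 ⟨v, iha _ v hv, rfl⟩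
    intro y hy
    simp only [OCode.eval, Nat.unpaired, Part.map_eq_map, Part.mem_map_iff] at hy ⊢
    obtain ⟨k, hk, rfl⟩ := hy
    obtain ⟨hk, hlt⟩ := Nat.mem_rfind.1 hk
    exact ⟨k, Nat.mem_rfind.2 ⟨hmap k _ hk, fun hj => hmap _ _ (hlt hj)⟩, rfl⟩

theorem eventually_mem_eval {ι : Type*} {l : Filter ι} {G : ι → ℕ →. ℕ} {g : ℕ →. ℕ}
    (hG : ∀ n y, y ∈ g n → ∀ᶠ i in l, y ∈ G i n) (c : OCode) {x y : ℕ}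
    (hy : y ∈ c.eval g x) : ∀ᶠ i in l, y ∈ c.eval (G i) x := by
  induction c generalizing x y with
  | zero | succ | left | right => exact .of_forall fun _ => hy
  | oracle => exact hG x y hy
  | pair a b iha ihb =>
    simp only [OCode.eval, Seq.seq, Part.map_eq_map, Part.mem_bind_iff, Part.mem_map_iff]
      at hy ⊢
    obtain ⟨_, ⟨u, hu, rfl⟩, v, hv, rfl⟩ := hy
    filter_upwards [iha hu, ihb hv] with i hu hv
    exact ⟨_, ⟨u, hu, rfl⟩, v, hv, rfl⟩
  | comp a b iha ihb =>
    obtain ⟨u, hu, hy⟩ := Part.mem_bind_iff.1 hy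
    filter_upwards [ihb hu, iha hy] with i hu hy
    exact Part.mem_bind_iff.2 ⟨u, hu, hy⟩
  | prec a b iha ihb =>
    simp only [OCode.eval, Nat.unpaired] at hy ⊢
    generalize x.unpair.2 = n at hy ⊢
    induction n generalizing y with
    | zero => exact iha hy
    | succ n ihn =>
      obtain ⟨i, hi, hy⟩ := Part.mem_bind_iff.1 hy
      filter_upwards [ihn hi, ihb hy] with j hi hy
      exact Part.mem_bind_iff.2 ⟨i, hi, hy⟩
  | rfind' a iha =>
    have hmap : ∀ j b,
        b ∈ (fun v => decide (v = 0)) <$> a.eval g (Nat.pair x.unpair.1 (j + x.unpair.2)) →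
          ∀ᶠ i in l, b ∈ (fun v => decide (v = 0)) <$>
            a.eval (G i) (Nat.pair x.unpair.1 (j + x.unpair.2)) := by
      intro j b hb
      obtain ⟨v, hv, rfl⟩ := (Part.mem_map_iff _).1 hb
      filter_upwards [iha hv] with i hv
      exact (Part.mem_map_iff _).2 ⟨v, hv, rfl⟩
    simp only [OCode.eval, Nat.unpaired, Part.map_eq_map, Part.mem_map_iff] at hy ⊢
    obtain ⟨k, hk, rfl⟩ := hy
    obtain ⟨hk, hlt⟩ := Nat.mem_rfind.1 hk
    filter_upwards [hmap k _ hk,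
      (Set.finite_Iio k).eventually_all.2 fun j hj => hmap j _ (hlt hj)] with i hk hlt
    exact ⟨k, Nat.mem_rfind.2 ⟨hk, fun hj => hlt _ hj⟩, rfl⟩

theorem dom_eval_totalize_iff (c : OCode) (f : ℕ → ℕ) (x : ℕ) :
    (c.eval (totalize f) x).Dom ↔
      ∃ σ : List ℕ, (∀ n, listOracle σ n ≤ totalize f n) ∧ (c.eval (listOracle σ) x).Dom := by
  constructor
  · intro h
    have hG : ∀ n y, y ∈ totalize f n → ∀ᶠ u in atTop, y ∈ listOracle (funToList f u) n := by
      intro n y hy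
      rw [totalize, Part.mem_some_iff] at hy
      subst hy
      filter_upwards [eventually_gt_atTop n] with u hu
      simp [listOracle, getElem?_funToList, hu]
    obtain ⟨u, hu⟩ := (eventually_mem_eval hG c (Part.get_mem h)).exists
    exact ⟨_, listOracle_funToList_le f u, Part.dom_iff_mem.2 ⟨_, hu⟩⟩
  · rintro ⟨σ, hσ, h⟩
    exact Part.dom_iff_mem.2 ⟨_, eval_mono hσ c x _ (Part.get_mem h)⟩

def toCode : OCode → Code → Code
  | zero, _ => .zero
  | succ, _ => .succ
  | left, _ => .left
  | right, _ => .right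
  | oracle, o => o
  | pair a b, o => .pair (a.toCode o) (b.toCode o)
  | comp a b, o => .comp (a.toCode o) (b.toCode o)
  | prec a b, o => .prec (a.toCode o) (b.toCode o)
  | rfind' a, o => .rfind' (a.toCode o)

theorem eval_toCode (c : OCode) (o : Code) : (c.toCode o).eval = c.eval o.eval := by
  induction c with
  | zero | succ | left | right | oracle => rfl
  | pair a b iha ihb | comp a b iha ihb | prec a b iha ihb =>
    funext x
    simp [toCode, OCode.eval, Code.eval, iha, ihb]
  | rfind' a iha =>
    funext x
    simp [toCode, OCode.eval, Code.eval, iha]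

/-- The course-of-values step computing `(OCode.ofNat n).toCode o` from the translations
`l` of the codes below `n`, following the clauses of `OCode.ofNat`. -/
def toCodeStep (o : Code) (l : List Code) : Option Code :=
  let n := l.length - 5
  let m := n.div2.div2
  let binary (k : Code → Code → Code) := l[m.unpair.1]?.bind fun c₁ => l[m.unpair.2]?.map (k c₁)
  if l.length < 4 then [Code.zero, .succ, .left, .right][l.length]?
  else if l.length = 4 then some o
  else cond n.bodd (cond n.div2.bodd (l[m]?.map .rfind') (binary .prec))
    (cond n.div2.bodd (binary .comp) (binary .pair))

open Primrec Nat.Partrec.Code in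
theorem primrec_toCodeStep : Primrec₂ toCodeStep := by
  have len : Primrec fun a : Code × List Code => a.2.length := list_length.comp snd
  have n : Primrec fun a : Code × List Code => a.2.length - 5 := nat_sub.comp len (const 5)
  have m : Primrec fun a : Code × List Code => (a.2.length - 5).div2.div2 :=
    nat_div2.comp (nat_div2.comp n)
  have binary (k : Code → Code → Code) (hk : Primrec₂ k) : Primrec fun a : Code × List Code =>
      a.2[(a.2.length - 5).div2.div2.unpair.1]?.bind
        fun c₁ => a.2[(a.2.length - 5).div2.div2.unpair.2]?.map (k c₁) :=
    option_bind (list_getElem?.comp snd (fst.comp (unpair.comp m)))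
      (option_map ((list_getElem?.comp snd (snd.comp (unpair.comp m))).comp fst)
        (hk.comp (snd.comp fst) snd).to₂).to₂
  exact (Primrec.ite (nat_lt.comp len (const 4)) (list_getElem?.comp (const _) len) <|
    Primrec.ite (Primrec.eq.comp len (const 4)) (option_some.comp fst) <|
    cond (nat_bodd.comp n)
      (cond (nat_bodd.comp (nat_div2.comp n))
        (option_map (list_getElem?.comp snd m) (primrec_rfind'.comp snd).to₂)
        (binary _ primrec₂_prec))
      (cond (nat_bodd.comp (nat_div2.comp n)) (binary _ primrec₂_comp)
        (binary _ primrec₂_pair))).of_eq fun _ => rfl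

theorem primrec₂_toCode_ofNat :
    Primrec₂ fun (o : Code) (n : ℕ) => (OCode.ofNat n).toCode o := by
  refine Primrec.nat_strong_rec _ primrec_toCodeStep fun o n => ?_
  match n with
  | 0 | 1 | 2 | 3 | 4 => simp [toCodeStep, OCode.ofNat, toCode]
  | n + 5 =>
    have hm : n.div2.div2 < n + 5 := by
      simp only [Nat.div2_val]
      omega
    have hget : ∀ i < n + 5,
        ((List.range (n + 5)).map fun k => (OCode.ofNat k).toCode o)[i]? =
          some ((OCode.ofNat i).toCode o) := fun i hi => by
      simp [List.getElem?_range hi]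
    simp only [toCodeStep, List.length_map, List.length_range, Nat.add_sub_cancel,
      hget _ hm, hget _ (hm.trans_le' (Nat.unpair_left_le _)),
      hget _ (hm.trans_le' (Nat.unpair_right_le _))]
    rw [if_neg (by omega), if_neg (by omega), OCode.ofNat]
    cases n.bodd <;> cases n.div2.bodd <;> rfl

end OCode

theorem exists_code_listOracle : ∃ c : Code,
    c.eval = fun p => listOracle (Denumerable.ofNat (List ℕ) p.unpair.1) p.unpair.2 :=
  Code.exists_code.1 <| Partrec.nat_iff.1 <| Computable.ofOption <|
    (Primrec.list_getElem?.comp ((Primrec.ofNat _).comp (Primrec.fst.comp Primrec.unpair))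
      (Primrec.snd.comp Primrec.unpair)).to_comp

noncomputable def listCode (σ : List ℕ) : Code :=
  exists_code_listOracle.choose.curry (Encodable.encode σ)

theorem eval_listCode (σ : List ℕ) : (listCode σ).eval = listOracle σ := by
  funext x
  simp [listCode, Code.eval_curry, exists_code_listOracle.choose_spec]

theorem primrec_listCode : Primrec listCode :=
  Code.primrec₂_curry.comp (Primrec.const _) Primrec.encode

def IsDelta02Code (d : ℕ) : Prop :=
  TotCode d ∧ ∀ x, ∃ N, ∀ s ≥ N, ∀ v ∈ phi d (Nat.pair s x), ∀ w ∈ phi d (Nat.pair N x), v = w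

def limitSet (d : ℕ) : Set ℕ := {x | ∀ᶠ s in atTop, 1 ∈ phi d (Nat.pair s x)}

def AgreesFrom (d : ℕ) (σ : List ℕ) (s : ℕ) : Prop :=
  ∀ t ≥ s, ∀ i v, v ∈ phi d (Nat.pair t i) → ∀ a ∈ σ[i]?, a = if v = 1 then 1 else 0

def HaltsOnLimit (e d x : ℕ) : Prop :=
  ∃ σ s, AgreesFrom d σ s ∧ (OEval e (listOracle σ) x).Dom

namespace IsDelta02Code

variable {d : ℕ}

theorem exists_eventually_eq (hd : IsDelta02Code d) (x : ℕ) :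
    ∃ w, ∀ᶠ s in atTop, ∀ v ∈ phi d (Nat.pair s x), v = w :=
  let ⟨N, hN⟩ := hd.2 x
  ⟨_, eventually_atTop.2 ⟨N, fun s hs v hv => hN s hs v hv _ (Part.get_mem (hd.1 _))⟩⟩

theorem eventually_mem_limitSet_iff (hd : IsDelta02Code d) (x : ℕ) :
    ∀ᶠ s in atTop, ∀ v ∈ phi d (Nat.pair s x), (v = 1 ↔ x ∈ limitSet d) := by
  obtain ⟨w, hw⟩ := hd.exists_eventually_eq x
  have hmem : x ∈ limitSet d ↔ w = 1 := by
    constructor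
    · intro h
      obtain ⟨s, hs, h1⟩ := (hw.and h).exists
      exact (hs 1 h1).symm
    · rintro rfl
      filter_upwards [hw] with s hs
      simpa [hs _ (Part.get_mem (hd.1 _))] using Part.get_mem (hd.1 (Nat.pair s x))
  filter_upwards [hw] with s hs v hv
  rw [hmem, hs v hv]

theorem delta02 (hd : IsDelta02Code d) : Delta02 (limitSet d) := by
  have hval : Computable fun p => (phi d p).get (hd.1 p) :=
    (Code.eval_part.comp (Computable.const _) Computable.id).of_eq
      fun p => (Part.some_get _).symm
  refine ⟨fun s x => decide ((phi d (Nat.pair s x)).get (hd.1 _) = 1),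
    (Primrec.eq.comp Primrec.id (Primrec.const 1)).decide.to_comp.comp
      (hval.comp (Primrec₂.natPair.to_comp.comp Computable.fst Computable.snd)), fun x => ?_⟩
  obtain ⟨N, hN⟩ := eventually_atTop.1 (hd.eventually_mem_limitSet_iff x)
  exact ⟨N, fun s hs => by simpa using hN s hs _ (Part.get_mem _)⟩

theorem listOracle_le_chi_iff (hd : IsDelta02Code d) (σ : List ℕ) :
    (∀ n, listOracle σ n ≤ chi (limitSet d) n) ↔ ∃ s, AgreesFrom d σ s := by
  classical
  constructor
  · intro h
    obtain ⟨s, hs⟩ := eventually_atTop.1 <| (Set.finite_Iio σ.length).eventually_all.2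
      fun i _ => hd.eventually_mem_limitSet_iff i
    refine ⟨s, fun t ht i v hv a ha => ?_⟩
    have hi : i < σ.length := (List.getElem?_eq_some_iff.1 ha).1
    have ha' : a = if i ∈ limitSet d then 1 else 0 :=
      Part.mem_some_iff.1 (h i a (Part.mem_ofOption.2 ha))
    simp [ha', hs t ht i hi v hv]
  · rintro ⟨s, hs⟩ n a ha
    obtain ⟨t, ht, hts⟩ :=
      ((hd.eventually_mem_limitSet_iff n).and (eventually_ge_atTop s)).exists
    have hv := Part.get_mem (hd.1 (Nat.pair t n))
    have ha' := hs t hts n _ hv a (Part.mem_ofOption.1 ha)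
    simp [chi, ha', ht _ hv]

theorem dom_oeval_chi_iff (hd : IsDelta02Code d) (e x : ℕ) :
    (OEval e (chi (limitSet d)) x).Dom ↔ HaltsOnLimit e d x := by
  classical
  refine ((OCode.ofNat e).dom_eval_totalize_iff
    (fun n => if n ∈ limitSet d then 1 else 0) x).trans ?_
  show (∃ σ, (∀ n, listOracle σ n ≤ chi (limitSet d) n) ∧ _) ↔ _
  simp only [HaltsOnLimit, OEval, hd.listOracle_le_chi_iff, exists_and_right]

end IsDelta02Code

theorem Delta02.exists_isDelta02Code {A : Set ℕ} (hA : Delta02 A) :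
    ∃ d, IsDelta02Code d ∧ limitSet d = A := by
  obtain ⟨F, hF, hlim⟩ := hA
  have hcomp : Computable fun p : ℕ => cond (F p.unpair.1 p.unpair.2) 1 0 :=
    Computable.cond (hF.comp (Computable.fst.comp Primrec.unpair.to_comp)
      (Computable.snd.comp Primrec.unpair.to_comp)) (Computable.const 1) (Computable.const 0)
  obtain ⟨c, hc⟩ := Code.exists_code.1 (Partrec.nat_iff.1 hcomp.partrec)
  have hphi : ∀ s x, phi (Encodable.encode c) (Nat.pair s x) = Part.some (cond (F s x) 1 0) := by
    intro s x
    simp [phi, hc]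
  have hmem : ∀ s x, 1 ∈ phi (Encodable.encode c) (Nat.pair s x) ↔ F s x = true := by
    intro s x
    cases h : F s x <;> simp [hphi, h]
  refine ⟨Encodable.encode c, ⟨fun p => ?_, fun x => ?_⟩, ?_⟩
  · simp [phi, hc]
  · obtain ⟨N, hN⟩ := hlim x
    refine ⟨N, fun s hs v hv w hw => ?_⟩
    rw [hphi, Part.mem_some_iff] at hv hw
    rw [hv, hw, Bool.eq_iff_iff.2 ((hN s hs).trans (hN N le_rfl).symm)]
  · ext x
    obtain ⟨N, hN⟩ := hlim x
    simp only [limitSet, Set.mem_ofPred_eq, hmem]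
    constructor
    · intro h
      obtain ⟨s, hs, hsN⟩ := (h.and (eventually_ge_atTop N)).exists
      exact (hN s hsN).1 hs
    · intro hx
      exact eventually_atTop.2 ⟨N, fun s hs => (hN s hs).2 hx⟩

theorem mem_delta02FIN_iff {e : ℕ} :
    e ∈ Delta02FIN ↔ ∀ d, IsDelta02Code d → {x | HaltsOnLimit e d x}.Finite := by
  constructor
  · intro he d hd
    simpa only [hd.dom_oeval_chi_iff] using he _ hd.delta02
  · intro h A hA
    obtain ⟨d, hd, rfl⟩ := hA.exists_isDelta02Code
    simpa only [hd.dom_oeval_chi_iff] using h d hd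

section Classification

open Primrec

theorem isSigma_one_mem_eval : IsSigma 1 fun p : (Code × ℕ) × ℕ => p.2 ∈ p.1.1.eval p.1.2 :=
  ⟨fun q => Code.evaln q.2 q.1.1.1 q.1.1.2 = some q.1.2,
    PrimrecPred.not (Primrec.eq.comp (Code.primrec_evaln.comp
      ((snd.pair (fst.comp (fst.comp fst))).pair (snd.comp (fst.comp fst))))
      (option_some.comp (snd.comp fst))),
    fun _ => Code.evaln_complete⟩

theorem isSigma_one_mem_phi : IsSigma 1 fun p : (ℕ × ℕ) × ℕ => p.2 ∈ phi p.1.1 p.1.2 :=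
  isSigma_one_mem_eval.comp
    ((((Primrec.ofNat Code).comp (fst.comp fst)).pair (snd.comp fst)).pair snd)

theorem isSigma_one_dom_oeval_listOracle :
    IsSigma 1 fun p : (ℕ × List ℕ) × ℕ => (OEval p.1.1 (listOracle p.1.2) p.2).Dom := by
  have hcode : Primrec fun p : (ℕ × List ℕ) × ℕ =>
      ((OCode.ofNat p.1.1).toCode (listCode p.1.2), p.2) :=
    (OCode.primrec₂_toCode_ofNat.comp (primrec_listCode.comp (snd.comp fst))
      (fst.comp fst)).pair snd
  refine ((IsSigma.exists (P := fun q v => v ∈ q.1.eval q.2) isSigma_one_mem_eval).comp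
    hcode).of_iff fun p => ?_
  simp [OEval, OCode.eval_toCode, eval_listCode, Part.dom_iff_mem]

theorem isPi_one_agreesFrom : IsPi 1 fun p : ℕ × List ℕ × ℕ => AgreesFrom p.1 p.2.1 p.2.2 := by
  have hmem := isSigma_one_mem_phi.comp (f := fun q : (ℕ × List ℕ × ℕ) × ℕ × ℕ × ℕ × ℕ =>
    ((q.1.1, Nat.pair q.2.1 q.2.2.1), q.2.2.2.1))
    (((fst.comp fst).pair (Primrec₂.natPair.comp (fst.comp snd) (fst.comp (snd.comp snd)))).pair
      (fst.comp (snd.comp (snd.comp snd))))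
  have hdec : PrimrecPred fun q : (ℕ × List ℕ × ℕ) × ℕ × ℕ × ℕ × ℕ =>
      q.2.1 < q.1.2.2 ∨ q.1.2.1[q.2.2.1]? ≠ some q.2.2.2.2 ∨
        q.2.2.2.2 = if q.2.2.2.1 = 1 then 1 else 0 :=
    .or (nat_lt.comp (fst.comp snd) (snd.comp (snd.comp fst))) <| .or
      (.not (Primrec.eq.comp
        (list_getElem?.comp (fst.comp (snd.comp fst)) (fst.comp (snd.comp snd)))
        (option_some.comp (snd.comp (snd.comp (snd.comp snd))))))
      (Primrec.eq.comp (snd.comp (snd.comp (snd.comp snd)))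
        (Primrec.ite (Primrec.eq.comp (fst.comp (snd.comp (snd.comp snd))) (const 1)) (const 1)
          (const 0)))
  refine (IsPi.forall (P := fun p (q : ℕ × ℕ × ℕ × ℕ) =>
      ¬q.2.2.1 ∈ phi p.1 (Nat.pair q.1 q.2.1) ∨
        (q.1 < p.2.2 ∨ p.2.1[q.2.1]? ≠ some q.2.2.2 ∨ q.2.2.2 = if q.2.2.1 = 1 then 1 else 0))
    (hmem.not.or (hdec.isPi 1))).of_iff fun p => ?_
  simp only [AgreesFrom, Prod.forall, Option.mem_def]
  constructor
  · intro h t ht i v hv a ha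
    grind
  · intro h t i v a
    grind

theorem isSigma_two_haltsOnLimit :
    IsSigma 2 fun p : ℕ × ℕ × ℕ => HaltsOnLimit p.1 p.2.1 p.2.2 := by
  have hagree := isPi_one_agreesFrom.comp (f := fun q : (ℕ × ℕ × ℕ) × List ℕ × ℕ =>
    (q.1.2.1, q.2.1, q.2.2)) ((fst.comp (snd.comp fst)).pair snd)
  have hdom := isSigma_one_dom_oeval_listOracle.comp (f := fun q : (ℕ × ℕ × ℕ) × List ℕ × ℕ =>
    ((q.1.1, q.2.1), q.1.2.2))
    (((fst.comp fst).pair (fst.comp snd)).pair (snd.comp (snd.comp fst)))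
  refine (IsSigma.exists (P := fun p (q : List ℕ × ℕ) =>
      AgreesFrom p.2.1 q.1 q.2 ∧ (OEval p.1 (listOracle q.1) p.2.2).Dom)
    (hagree.isSigma_succ.and hdom.succ)).of_iff fun p => ?_
  simp only [HaltsOnLimit, Prod.exists]

theorem isPi_three_isDelta02Code : IsPi 3 IsDelta02Code := by
  have htot : IsPi 3 TotCode :=
    (IsPi.forall (P := fun d i => (phi d i).Dom) ((IsSigma.exists
      (P := fun (p : ℕ × ℕ) v => v ∈ phi p.1 p.2) isSigma_one_mem_phi).of_iff
        fun _ => Part.dom_iff_mem.symm).isPi_succ).succ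
  have hstable : IsPi 1 fun p : (ℕ × ℕ) × ℕ => ∀ q : ℕ × ℕ × ℕ,
      (¬q.2.1 ∈ phi p.1.1 (Nat.pair q.1 p.1.2) ∨ ¬q.2.2 ∈ phi p.1.1 (Nat.pair p.2 p.1.2)) ∨
        (q.1 < p.2 ∨ q.2.1 = q.2.2) := by
    refine IsPi.forall ((IsSigma.not ?_).or (IsSigma.not ?_) |>.or (PrimrecPred.isPi ?_ 1))
    · exact isSigma_one_mem_phi.comp (((fst.comp (fst.comp fst)).pair (Primrec₂.natPair.comp
        (fst.comp snd) (snd.comp (fst.comp fst)))).pair (fst.comp (snd.comp snd)))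
    · exact isSigma_one_mem_phi.comp (((fst.comp (fst.comp fst)).pair (Primrec₂.natPair.comp
        (snd.comp fst) (snd.comp (fst.comp fst)))).pair (snd.comp (snd.comp snd)))
    · exact .or (nat_lt.comp (fst.comp snd) (snd.comp fst))
        (Primrec.eq.comp (fst.comp (snd.comp snd)) (snd.comp (snd.comp snd)))
  have hconv : IsPi 3 fun d => ∀ x, ∃ N, ∀ q : ℕ × ℕ × ℕ,
      (¬q.2.1 ∈ phi d (Nat.pair q.1 x) ∨ ¬q.2.2 ∈ phi d (Nat.pair N x)) ∨
        (q.1 < N ∨ q.2.1 = q.2.2) :=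
    IsPi.forall (IsSigma.exists hstable.isSigma_succ).isPi_succ
  refine (htot.and hconv).of_iff fun d => ?_
  simp only [IsDelta02Code, Prod.forall]
  refine and_congr_right fun _ => forall_congr' fun x => exists_congr fun N => ?_
  constructor
  · intro h s ht v hv w hw
    grind
  · intro h s v w
    grind

theorem isSigma_three_bddAbove_haltsOnLimit :
    IsSigma 3 fun p : ℕ × ℕ => ∃ b, ∀ x, x ≤ b ∨ ¬HaltsOnLimit p.1 p.2 x :=
  IsSigma.exists (IsPi.isSigma_succ (IsPi.forall
    ((nat_le.comp snd (snd.comp fst)).isPi 2 |>.or (isSigma_two_haltsOnLimit.not.comp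
      ((fst.comp (fst.comp fst)).pair ((snd.comp (fst.comp fst)).pair snd))))))

end Classification

/-- Δ⁰₂[FIN] is Π⁰₄. -/
theorem delta02fin_pi4 : Pi4 Delta02FIN := by
  have hmem : IsPi 4 fun e => ∀ d, ¬IsDelta02Code d ∨ ∃ b, ∀ x, x ≤ b ∨ ¬HaltsOnLimit e d x :=
    IsPi.forall ((IsSigma.comp isPi_three_isDelta02Code .snd).or
      isSigma_three_bddAbove_haltsOnLimit).isPi_succ
  refine pi4_of_isPi (hmem.of_iff fun e => ?_)
  simp only [mem_delta02FIN_iff, Set.finite_iff_bddAbove, bddAbove_def, Set.mem_ofPred_eq,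
    or_iff_not_imp_left, not_imp_not, not_not]
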